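/- arXiv:math/9907102 — 2 statements merged into one kernel-verified Lean document; each statement's English description precedes it below -/
import Mathlib

section
/- Let A(ξ,λ) = Σ_{j=2μ}^{2m} λ^{2m−j} A_j(ξ) be N-elliptic with parameter in [0,∞). Then the function Q(τ) := τ^{−2μ} A((0,…,0,τ), 1), defined for real τ ≠ 0, extends to a polynomial in τ of degree exactly 2m − 2μ, and there exists a constant C > 0 such that |Q(τ)| ≥ C (1 + |τ|)^{2m−2μ} for all τ ∈ ℝ; in particular Q(0) ≠ 0 and Q has no real roots. -/
/-
Homogeneity of a polynomial map extends from positive to all real scalars, since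
`τ ↦ A_j(τ ξ)` is a polynomial agreeing with `A_j(ξ) τ^j` on `(0, ∞)`. Hence on the line
`(0,…,0,τ)` the pencil at `λ = 1` is `τ^{2μ} Q(τ)` with `Q = Σ_j A_j(e_n) τ^{j-2μ}`.
Ellipticity at `λ = 1` gives `|Q(τ)| ≥ C (1+|τ|)^{2m-2μ}` for `τ ≠ 0`, and continuity extends it
to `τ = 0`; ellipticity at `λ = 0` gives `A_{2m}(e_n) ≠ 0`, the leading coefficient of `Q`.
-/

open MeasureTheory Finset Polynomial

noncomputable section

/-- `A : ℝⁿ → ℂ` is a (complex-valued) polynomial map, homogeneous of degree `j`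
(under positive scaling). -/
def IsHomogPoly (n j : ℕ) (A : EuclideanSpace ℝ (Fin n) → ℂ) : Prop :=
  (∃ p : MvPolynomial (Fin n) ℂ, ∀ ξ, A ξ = MvPolynomial.eval (fun i => (ξ i : ℂ)) p) ∧
    ∀ t : ℝ, 0 < t → ∀ ξ, A (t • ξ) = (t : ℂ) ^ j * A ξ

/-- The operator pencil `A(ξ,λ) = Σ_{j=2μ}^{2m} λ^{2m−j} A_j(ξ)`. -/
def pencil {n : ℕ} (m μ : ℕ) (A : ℕ → EuclideanSpace ℝ (Fin n) → ℂ)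
    (ξ : EuclideanSpace ℝ (Fin n)) (lam : ℝ) : ℂ :=
  ∑ j ∈ Finset.Icc (2 * μ) (2 * m), (lam : ℂ) ^ (2 * m - j) * A j ξ

/-- `N`-ellipticity with parameter in `[0,∞)`. -/
def NElliptic {n : ℕ} (m μ : ℕ) (A : ℕ → EuclideanSpace ℝ (Fin n) → ℂ) : Prop :=
  ∃ C > (0 : ℝ), ∀ (ξ : EuclideanSpace ℝ (Fin n)) (lam : ℝ), 0 ≤ lam →
    C * ‖ξ‖ ^ (2 * μ) * (lam + ‖ξ‖) ^ (2 * m - 2 * μ) ≤ ‖pencil m μ A ξ lam‖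

/-- The vector `(ξ', t) ∈ ℝ^{k+1}` obtained by appending a last coordinate. -/
def snocVec {k : ℕ} (ξ' : EuclideanSpace ℝ (Fin k)) (t : ℝ) :
    EuclideanSpace ℝ (Fin (k + 1)) :=
  (WithLp.equiv 2 (Fin (k + 1) → ℝ)).symm (Fin.snoc (WithLp.equiv 2 (Fin k → ℝ) ξ') t)

lemma IsHomogPoly.map_smul {n j : ℕ} {A : EuclideanSpace ℝ (Fin n) → ℂ} (hA : IsHomogPoly n j A)
    (t : ℝ) (ξ : EuclideanSpace ℝ (Fin n)) : A (t • ξ) = (t : ℂ) ^ j * A ξ := by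
  obtain ⟨⟨p, hp⟩, hhom⟩ := hA
  set q : ℂ[X] := MvPolynomial.aeval (fun i => C (ξ i : ℂ) * X) p
  have hq : ∀ s : ℝ, q.eval (s : ℂ) = A (s • ξ) := by
    intro s
    rw [hp, ← coe_aeval_eq_eval, MvPolynomial.comp_aeval_apply]
    change MvPolynomial.eval _ p = _
    congr 2
    funext i
    rw [map_mul, aeval_C, aeval_X, PiLp.smul_apply, smul_eq_mul, Complex.ofReal_mul,
      Algebra.algebraMap_self, RingHom.id_apply, mul_comm]
  have hq_eq : q = C (A ξ) * X ^ j := by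
    apply eq_of_infinite_eval_eq
    refine Set.Infinite.mono ?_ ((Set.Ioi_infinite (0 : ℝ)).image Complex.ofReal_injective.injOn)
    rintro _ ⟨s, hs, rfl⟩
    change q.eval (s : ℂ) = _
    rw [hq, hhom s hs, eval_C_mul, eval_X_pow, mul_comm]
  rw [← hq, hq_eq, eval_C_mul, eval_X_pow, mul_comm]

lemma snocVec_zero_eq_single (k : ℕ) (τ : ℝ) :
    snocVec (0 : EuclideanSpace ℝ (Fin k)) τ = EuclideanSpace.single (Fin.last k) τ := by
  ext i
  induction i using Fin.lastCases with
  | last => simp [snocVec]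
  | cast i => simp [snocVec, (Fin.castSucc_lt_last i).ne]

lemma snocVec_zero_eq_smul (k : ℕ) (τ : ℝ) :
    snocVec (0 : EuclideanSpace ℝ (Fin k)) τ = τ • snocVec (0 : EuclideanSpace ℝ (Fin k)) 1 := by
  ext i
  simp [snocVec_zero_eq_single, PiLp.single_apply]

lemma norm_snocVec_zero (k : ℕ) (τ : ℝ) : ‖snocVec (0 : EuclideanSpace ℝ (Fin k)) τ‖ = |τ| := by
  rw [snocVec_zero_eq_single, PiLp.norm_single, Real.norm_eq_abs]

section ShiftedSum

variable {R : Type*}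

def shiftedSum [Semiring R] (a b : ℕ) (c : ℕ → R) : R[X] :=
  ∑ j ∈ Icc a b, C (c j) * X ^ (j - a)

lemma pow_mul_eval_shiftedSum [CommSemiring R] (a b : ℕ) (c : ℕ → R) (z : R) :
    z ^ a * (shiftedSum a b c).eval z = ∑ j ∈ Icc a b, c j * z ^ j := by
  rw [shiftedSum, eval_finsetSum, Finset.mul_sum]
  refine Finset.sum_congr rfl fun j hj => ?_
  rw [eval_C_mul, eval_X_pow, mul_left_comm, ← pow_add, Nat.add_sub_cancel' (mem_Icc.mp hj).1]

lemma degree_shiftedSum [Semiring R] {a b : ℕ} (hab : a ≤ b) {c : ℕ → R} (hc : c b ≠ 0) :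
    (shiftedSum a b c).degree = (b - a : ℕ) := by
  apply degree_eq_of_le_of_coeff_ne_zero
  · refine (degree_sum_le _ _).trans (Finset.sup_le fun j hj => ?_)
    refine (degree_C_mul_X_pow_le _ _).trans ?_
    exact_mod_cast Nat.sub_le_sub_right (mem_Icc.mp hj).2 a
  · rw [shiftedSum, finsetSum_coeff, Finset.sum_eq_single_of_mem b (right_mem_Icc.mpr hab)]
    · simpa using hc
    · intro j hj hjb
      have : j - a ≠ b - a := by grind
      simp [coeff_X_pow, this.symm]

end ShiftedSum

lemma pencil_zero_right {n m μ : ℕ} (hμm : μ ≤ m) (A : ℕ → EuclideanSpace ℝ (Fin n) → ℂ)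
    (ξ : EuclideanSpace ℝ (Fin n)) : pencil m μ A ξ 0 = A (2 * m) ξ := by
  rw [pencil, Finset.sum_eq_single_of_mem (2 * m) (right_mem_Icc.mpr (by omega))]
  · simp
  · intro j hj hjm
    rw [Complex.ofReal_zero, zero_pow (by grind), zero_mul]

lemma NElliptic.apply_ne_zero {n m μ : ℕ} (hμm : μ ≤ m) {A : ℕ → EuclideanSpace ℝ (Fin n) → ℂ}
    (hell : NElliptic m μ A) {ξ : EuclideanSpace ℝ (Fin n)} (hξ : ξ ≠ 0) : A (2 * m) ξ ≠ 0 := by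
  obtain ⟨C, hC, hCle⟩ := hell
  have h := hCle ξ 0 le_rfl
  rw [pencil_zero_right hμm, zero_add, mul_assoc, ← pow_add] at h
  intro h0
  rw [h0, norm_zero] at h
  exact (mul_pos hC (pow_pos (norm_pos_iff.mpr hξ) _)).not_ge h

lemma pencil_smul_one {n m μ : ℕ} {A : ℕ → EuclideanSpace ℝ (Fin n) → ℂ}
    (hA : ∀ j ∈ Icc (2 * μ) (2 * m), IsHomogPoly n j (A j)) (τ : ℝ) (ξ : EuclideanSpace ℝ (Fin n)) :
    pencil m μ A (τ • ξ) 1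
      = (τ : ℂ) ^ (2 * μ) * (shiftedSum (2 * μ) (2 * m) fun j => A j ξ).eval (τ : ℂ) := by
  rw [pow_mul_eval_shiftedSum, pencil]
  refine Finset.sum_congr rfl fun j hj => ?_
  rw [(hA j hj).map_smul, Complex.ofReal_one, one_pow, one_mul, mul_comm]

lemma le_of_forall_ne_of_continuous {f g : ℝ → ℝ} (hf : Continuous f) (hg : Continuous g) {a : ℝ}
    (h : ∀ x ≠ a, f x ≤ g x) (x : ℝ) : f x ≤ g x :=
  le_on_closure (s := {a}ᶜ) h hf.continuousOn hg.continuousOn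
    (closure_compl_singleton a ▸ Set.mem_univ x)

/-- the polynomial `Q(τ) = τ^{-2μ} A((0,…,0,τ),1)` for an `N`-elliptic pencil:
it has degree exactly `2m - 2μ`, satisfies `|Q(τ)| ≥ C (1+|τ|)^{2m-2μ}` on ℝ, `Q(0) ≠ 0`
and `Q` has no real roots. -/
theorem statement1 (k m μ : ℕ) (hμm : μ < m)
    (A : ℕ → EuclideanSpace ℝ (Fin (k + 1)) → ℂ)
    (hA : ∀ j ∈ Finset.Icc (2 * μ) (2 * m), IsHomogPoly (k + 1) j (A j))
    (hell : NElliptic m μ A) :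
    ∃ Q : Polynomial ℂ,
      (∀ τ : ℝ, τ ≠ 0 →
        Polynomial.eval (τ : ℂ) Q
          = ((τ : ℂ) ^ (2 * μ))⁻¹ * pencil m μ A (snocVec (0 : EuclideanSpace ℝ (Fin k)) τ) 1) ∧
      Q.degree = (2 * m - 2 * μ : ℕ) ∧
      (∃ C > (0 : ℝ), ∀ τ : ℝ,
        C * (1 + |τ|) ^ (2 * m - 2 * μ) ≤ ‖Polynomial.eval (τ : ℂ) Q‖) ∧
      Polynomial.eval 0 Q ≠ 0 ∧
      (∀ τ : ℝ, Polynomial.eval (τ : ℂ) Q ≠ 0) := by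
  set e := snocVec (0 : EuclideanSpace ℝ (Fin k)) 1
  set Q := shiftedSum (2 * μ) (2 * m) fun j => A j e
  have hfac (τ : ℝ) :
      pencil m μ A (snocVec 0 τ) 1 = (τ : ℂ) ^ (2 * μ) * Q.eval (τ : ℂ) := by
    rw [snocVec_zero_eq_smul, pencil_smul_one hA]
  have he : e ≠ 0 := by
    rw [← norm_ne_zero_iff, norm_snocVec_zero, abs_one]
    exact one_ne_zero
  obtain ⟨C, hC, hCle⟩ := id hell
  have hbound : ∀ τ : ℝ, C * (1 + |τ|) ^ (2 * m - 2 * μ) ≤ ‖Q.eval (τ : ℂ)‖ := by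
    refine le_of_forall_ne_of_continuous (by fun_prop) (by fun_prop) (a := 0) fun τ hτ => ?_
    have h := hCle (snocVec 0 τ) 1 zero_le_one
    rw [norm_snocVec_zero, hfac, norm_mul, norm_pow, Complex.norm_real, Real.norm_eq_abs] at h
    exact le_of_mul_le_mul_left (by linarith) (pow_pos (abs_pos.mpr hτ) (2 * μ))
  have hroot (τ : ℝ) : Q.eval (τ : ℂ) ≠ 0 := by
    rw [← norm_pos_iff]
    exact (by positivity : 0 < C * (1 + |τ|) ^ (2 * m - 2 * μ)).trans_le (hbound τ)
  refine ⟨Q, fun τ hτ => ?_, degree_shiftedSum (by omega) (hell.apply_ne_zero hμm.le he),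
    ⟨C, hC, hbound⟩, by simpa using hroot 0, hroot⟩
  rw [hfac, inv_mul_cancel_left₀ (pow_ne_zero _ (Complex.ofReal_ne_zero.mpr hτ))]

end
end

section
/- Let S ≥ 1, let 0 < a_1 < a_2 < … < a_S be real numbers and m_1, …, m_S positive integers. Let l be an integer with 0 ≤ l < 2(m_1 + … + m_S) and define κ ∈ {1,…,S} by 2(m_1 + … + m_{κ−1}) ≤ l < 2(m_1 + … + m_κ) (with the empty sum equal to 0). Then there exists a constant C > 0, depending only on S, l and m_1, …, m_S but not on a_1, …, a_S, such that C^{−1} · a_κ^{2l+1−4(m_1+…+m_κ)} · ∏_{s=κ+1}^S a_s^{−4m_s} ≤ ∫_{−∞}^{∞} t^{2l} ∏_{s=1}^S (t² + a_s²)^{−2m_s} dt ≤ C · a_κ^{2l+1−4(m_1+…+m_κ)} · ∏_{s=κ+1}^S a_s^{−4m_s}; that is, the two-sided integral estimate holds under the weaker hypothesis a_1 > 0 in place of a_1 ≥ 1. -/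
/-!
Split the factors of the denominator at `κ`. For the upper bound, `t² + a_s² ≥ t²` when `s < κ`
and `t² + a_s² ≥ a_s²` when `s > κ`, so the integrand is at most
`t^(2(l - 2P)) / (t² + a_κ²)^(2m_κ) / ∏_{s>κ} a_s^(4m_s)` with `P = ∑_{s<κ} m_s`; the substitution
`t = a_κ v` extracts the power of `a_κ`, and the remaining integral is finite because
`l - 2P < 2m_κ`. For the lower bound, restrict to `|t| ≤ a_κ`, where
`t² + a_s² ≤ 2 max(a_κ, a_s)²`, and `max(a_κ, a_s)` is `a_κ` for `s ≤ κ` and `a_s` for `s > κ`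
by monotonicity; integrating `t^(2l)` over `[-a_κ, a_κ]` gives the same scale.
-/

open MeasureTheory Finset

theorem integrable_pow_div_sq_add_one_pow {j n : ℕ} (h : j < n) :
    Integrable (fun v : ℝ => v ^ (2 * j) / (v ^ 2 + 1) ^ n) := by
  refine integrable_inv_one_add_sq.mono' (Measurable.aestronglyMeasurable (by fun_prop))
    (.of_forall fun v => ?_)
  rw [pow_mul, Real.norm_of_nonneg (by positivity)]
  calc (v ^ 2) ^ j / (v ^ 2 + 1) ^ n ≤ (v ^ 2 + 1) ^ j / (v ^ 2 + 1) ^ (j + 1) := by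
        gcongr
        · linarith
        · linarith [sq_nonneg v]
        · exact h
    _ = (1 + v ^ 2)⁻¹ := by rw [pow_succ]; field_simp; ring

theorem pow_div_sq_add_sq_pow_eq (j n : ℕ) {a : ℝ} (ha : a ≠ 0) (u : ℝ) :
    u ^ (2 * j) / (u ^ 2 + a ^ 2) ^ n =
      a ^ (2 * j) / a ^ (2 * n) * ((u / a) ^ (2 * j) / ((u / a) ^ 2 + 1) ^ n) := by
  rw [show (u / a) ^ 2 + 1 = (u ^ 2 + a ^ 2) / a ^ 2 by field_simp, div_pow, div_pow,
    ← pow_mul]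
  field_simp

theorem integrable_pow_div_sq_add_sq_pow {j n : ℕ} (h : j < n) {a : ℝ} (ha : a ≠ 0) :
    Integrable (fun u : ℝ => u ^ (2 * j) / (u ^ 2 + a ^ 2) ^ n) := by
  simp_rw [pow_div_sq_add_sq_pow_eq j n ha]
  exact ((integrable_pow_div_sq_add_one_pow h).comp_div ha).const_mul _

theorem integral_pow_div_sq_add_sq_pow (j n : ℕ) {a : ℝ} (ha : 0 < a) :
    ∫ u : ℝ, u ^ (2 * j) / (u ^ 2 + a ^ 2) ^ n =
      a ^ ((2 * j + 1 : ℝ) - 2 * n) * ∫ v : ℝ, v ^ (2 * j) / (v ^ 2 + 1) ^ n := by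
  simp_rw [pow_div_sq_add_sq_pow_eq j n ha.ne']
  rw [integral_const_mul, Measure.integral_comp_div (fun v => v ^ (2 * j) / (v ^ 2 + 1) ^ n),
    abs_of_pos ha, smul_eq_mul, ← mul_assoc,
    show (2 * j + 1 : ℝ) - 2 * n = ((2 * j + 1 : ℕ) : ℝ) - ((2 * n : ℕ) : ℝ) by push_cast; ring,
    Real.rpow_sub_natCast ha.ne', Real.rpow_natCast, pow_succ]
  ring

namespace Finset

variable {ι M : Type*} [Fintype ι] [LinearOrder ι] [LocallyFiniteOrderBot ι]
  [LocallyFiniteOrderTop ι] [CommMonoid M]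

theorem prod_Iic_mul_prod_Ioi (f : ι → M) (κ : ι) :
    (∏ s ∈ Iic κ, f s) * ∏ s ∈ Ioi κ, f s = ∏ s, f s := by
  rw [← prod_union (disjoint_left.mpr fun s hs hs' => (mem_Iic.mp hs).not_gt (mem_Ioi.mp hs'))]
  congr
  ext s
  simp [le_or_gt]

end Finset

theorem sub_two_mul_sum_Iio_lt {ι : Type*} [LinearOrder ι] [LocallyFiniteOrderBot ι]
    {m : ι → ℕ} {κ : ι} {l : ℕ} (hl₁ : 2 * ∑ s ∈ Iio κ, m s ≤ l)
    (hl₂ : l < 2 * ∑ s ∈ Iic κ, m s) : l - 2 * ∑ s ∈ Iio κ, m s < 2 * m κ := by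
  rw [← sum_Iio_add_eq_sum_Iic] at hl₂
  omega

section

variable {ι : Type*} [Fintype ι] [LinearOrder ι] [LocallyFiniteOrderBot ι]
  [LocallyFiniteOrderTop ι] (m : ι → ℕ) (a : ι → ℝ) (κ : ι)

theorem sq_pow_mul_le_prod_sq_add_sq_pow (t : ℝ) :
    (t ^ 2) ^ (2 * ∑ s ∈ Iio κ, m s) * (t ^ 2 + a κ ^ 2) ^ (2 * m κ) *
        ∏ s ∈ Ioi κ, a s ^ (4 * m s) ≤ ∏ s, (t ^ 2 + a s ^ 2) ^ (2 * m s) := by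
  have hP : ∏ s ∈ Ioi κ, a s ^ (4 * m s) = ∏ s ∈ Ioi κ, (a s ^ 2) ^ (2 * m s) :=
    prod_congr rfl fun s _ => by rw [← pow_mul, ← mul_assoc]; rfl
  rw [hP, ← prod_Iic_mul_prod_Ioi _ κ, ← prod_Iio_mul_eq_prod_Iic, mul_sum, ← prod_pow_eq_pow_sum]
  gcongr with s _ s _ <;> nlinarith [sq_nonneg t, sq_nonneg (a s)]

variable {m a κ}

theorem pow_div_prod_sq_add_sq_pow_le {l : ℕ} (hl : 2 * ∑ s ∈ Iio κ, m s ≤ l)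
    (ha : ∀ s, a s ≠ 0) (t : ℝ) :
    t ^ (2 * l) / ∏ s, (t ^ 2 + a s ^ 2) ^ (2 * m s) ≤
      t ^ (2 * (l - 2 * ∑ s ∈ Iio κ, m s)) / (t ^ 2 + a κ ^ 2) ^ (2 * m κ) /
        ∏ s ∈ Ioi κ, a s ^ (4 * m s) := by
  have hsplit : t ^ (2 * l) =
      t ^ (2 * (l - 2 * ∑ s ∈ Iio κ, m s)) * (t ^ 2) ^ (2 * ∑ s ∈ Iio κ, m s) := by
    rw [← pow_mul, ← pow_add]; congr 1; omega
  have hpos : ∀ s, 0 < t ^ 2 + a s ^ 2 := fun s => by have := ha s; positivity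
  rw [div_div, div_le_div_iff₀ (prod_pos fun s _ => pow_pos (hpos s) _)
    (mul_pos (pow_pos (hpos κ) _) (prod_pos fun s _ => Even.pow_pos ⟨2 * m s, by ring⟩ (ha s))),
    hsplit, mul_assoc, ← mul_assoc ((t ^ 2) ^ _)]
  exact mul_le_mul_of_nonneg_left (sq_pow_mul_le_prod_sq_add_sq_pow m a κ t)
    (by rw [pow_mul]; positivity)

theorem integrable_pow_div_prod_sq_add_sq_pow {l : ℕ} (hl₁ : 2 * ∑ s ∈ Iio κ, m s ≤ l)
    (hl₂ : l < 2 * ∑ s ∈ Iic κ, m s) (ha : ∀ s, a s ≠ 0) :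
    Integrable (fun t : ℝ => t ^ (2 * l) / ∏ s, (t ^ 2 + a s ^ 2) ^ (2 * m s)) := by
  refine ((integrable_pow_div_sq_add_sq_pow (sub_two_mul_sum_Iio_lt hl₁ hl₂) (ha κ)).div_const
      (∏ s ∈ Ioi κ, a s ^ (4 * m s))).mono'
    (Measurable.aestronglyMeasurable (by fun_prop)) (.of_forall fun t => ?_)
  rw [Real.norm_of_nonneg (div_nonneg (by rw [pow_mul]; positivity) (by positivity))]
  exact pow_div_prod_sq_add_sq_pow_le hl₁ ha t

theorem integral_pow_div_prod_sq_add_sq_pow_le {l : ℕ} (hl₁ : 2 * ∑ s ∈ Iio κ, m s ≤ l)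
    (hl₂ : l < 2 * ∑ s ∈ Iic κ, m s) (ha : ∀ s, 0 < a s) :
    ∫ t : ℝ, t ^ (2 * l) / ∏ s, (t ^ 2 + a s ^ 2) ^ (2 * m s) ≤
      (∫ v : ℝ, v ^ (2 * (l - 2 * ∑ s ∈ Iio κ, m s)) / (v ^ 2 + 1) ^ (2 * m κ)) *
        (a κ ^ ((2 * l + 1 : ℝ) - 4 * ∑ s ∈ Iic κ, (m s : ℝ)) / ∏ s ∈ Ioi κ, a s ^ (4 * m s)) := by
  have hexp : (2 * ((l - 2 * ∑ s ∈ Iio κ, m s : ℕ) : ℝ) + 1) - 2 * ((2 * m κ : ℕ) : ℝ) =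
      (2 * l + 1 : ℝ) - 4 * ∑ s ∈ Iic κ, (m s : ℝ) := by
    rw [← sum_Iio_add_eq_sum_Iic, Nat.cast_sub hl₁]
    push_cast
    ring
  calc _ ≤ ∫ t : ℝ, t ^ (2 * (l - 2 * ∑ s ∈ Iio κ, m s)) / (t ^ 2 + a κ ^ 2) ^ (2 * m κ) /
        ∏ s ∈ Ioi κ, a s ^ (4 * m s) :=
        integral_mono (integrable_pow_div_prod_sq_add_sq_pow hl₁ hl₂ fun s => (ha s).ne')
          ((integrable_pow_div_sq_add_sq_pow (sub_two_mul_sum_Iio_lt hl₁ hl₂)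
            (ha κ).ne').div_const _)
          (pow_div_prod_sq_add_sq_pow_le hl₁ fun s => (ha s).ne')
    _ = _ := by
      rw [integral_div, integral_pow_div_sq_add_sq_pow _ _ (ha κ), hexp]
      ring

theorem prod_sq_add_sq_pow_le (hmono : Monotone a) (h0 : ∀ s, 0 ≤ a s) {t : ℝ}
    (ht : t ^ 2 ≤ a κ ^ 2) :
    ∏ s, (t ^ 2 + a s ^ 2) ^ (2 * m s) ≤
      2 ^ (2 * ∑ s, m s) * (a κ ^ (4 * ∑ s ∈ Iic κ, m s) * ∏ s ∈ Ioi κ, a s ^ (4 * m s)) := by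
  have hfactor : ∀ s,
      (t ^ 2 + a s ^ 2) ^ (2 * m s) ≤ 2 ^ (2 * m s) * max (a κ) (a s) ^ (4 * m s) := by
    intro s
    have hκ : a κ ^ 2 ≤ max (a κ) (a s) ^ 2 := by gcongr; exacts [h0 κ, le_max_left _ _]
    have hs : a s ^ 2 ≤ max (a κ) (a s) ^ 2 := by gcongr; exacts [h0 s, le_max_right _ _]
    calc _ ≤ (2 * max (a κ) (a s) ^ 2) ^ (2 * m s) := by gcongr; linarith
      _ = _ := by ring
  calc _ ≤ ∏ s, 2 ^ (2 * m s) * max (a κ) (a s) ^ (4 * m s) :=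
        prod_le_prod (fun s _ => by positivity) fun s _ => hfactor s
    _ = _ := by
      rw [prod_mul_distrib, prod_pow_eq_pow_sum, ← mul_sum,
        ← prod_Iic_mul_prod_Ioi (fun s => max (a κ) (a s) ^ (4 * m s)) κ]
      congr 2
      · rw [mul_sum, ← prod_pow_eq_pow_sum]
        exact prod_congr rfl fun s hs => by rw [max_eq_left (hmono (mem_Iic.mp hs))]
      · exact prod_congr rfl fun s hs => by rw [max_eq_right (hmono (mem_Ioi.mp hs).le)]

theorem le_integral_pow_div_prod_sq_add_sq_pow {l : ℕ} (hmono : Monotone a) (ha : ∀ s, 0 < a s)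
    (hf : Integrable (fun t : ℝ => t ^ (2 * l) / ∏ s, (t ^ 2 + a s ^ 2) ^ (2 * m s))) :
    2 / ((2 * l + 1) * 2 ^ (2 * ∑ s, m s)) *
        (a κ ^ ((2 * l + 1 : ℝ) - 4 * ∑ s ∈ Iic κ, (m s : ℝ)) / ∏ s ∈ Ioi κ, a s ^ (4 * m s))
      ≤ ∫ t : ℝ, t ^ (2 * l) / ∏ s, (t ^ 2 + a s ^ 2) ^ (2 * m s) := by
  set K := 2 ^ (2 * ∑ s, m s) * (a κ ^ (4 * ∑ s ∈ Iic κ, m s) * ∏ s ∈ Ioi κ, a s ^ (4 * m s))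
    with hK
  have hκ := ha κ
  calc _ = ∫ t in -a κ..a κ, t ^ (2 * l) / K := by
        rw [intervalIntegral.integral_div, integral_pow, Odd.neg_pow (odd_two_mul_add_one l),
          show (2 * l + 1 : ℝ) - 4 * ∑ s ∈ Iic κ, (m s : ℝ) =
            ((2 * l + 1 : ℕ) : ℝ) - ((4 * ∑ s ∈ Iic κ, m s : ℕ) : ℝ) by push_cast; ring,
          Real.rpow_sub_natCast hκ.ne', Real.rpow_natCast, hK]
        field_simp
        push_cast
        ring
    _ ≤ ∫ t in Set.Ioc (-a κ) (a κ), t ^ (2 * l) / ∏ s, (t ^ 2 + a s ^ 2) ^ (2 * m s) := by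
        rw [intervalIntegral.integral_of_le (by linarith)]
        refine setIntegral_mono_on (Continuous.integrableOn_Ioc (by fun_prop)) hf.integrableOn
          measurableSet_Ioc fun t ht => ?_
        exact div_le_div_of_nonneg_left (by rw [pow_mul]; positivity)
          (prod_pos fun s _ => pow_pos (by have := ha s; positivity) _)
          (prod_sq_add_sq_pow_le hmono (fun s => (ha s).le) (sq_le_sq' ht.1.le ht.2))
    _ ≤ _ := setIntegral_le_integral hf (.of_forall fun t => div_nonneg
          (by rw [pow_mul]; positivity) (prod_nonneg fun s _ => by positivity))

end

theorem inv_max_mul_le_and_le_max_mul {c K X I : ℝ} (hc : 0 < c) (hX : 0 ≤ X)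
    (hlow : c * X ≤ I) (hup : I ≤ K * X) :
    (max c⁻¹ K)⁻¹ * X ≤ I ∧ I ≤ max c⁻¹ K * X :=
  ⟨(mul_le_mul_of_nonneg_right (inv_le_of_inv_le₀ hc (le_max_left _ _)) hX).trans hlow,
    hup.trans (mul_le_mul_of_nonneg_right (le_max_right _ _) hX)⟩

theorem statement7_general (S : ℕ) (hS : 0 < S) (m : Fin S → ℕ)
    (l : ℕ) (κ : Fin S)
    (hκ1 : 2 * ∑ s ∈ Finset.Iio κ, m s ≤ l)
    (hκ2 : l < 2 * ∑ s ∈ Finset.Iic κ, m s) :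
    ∃ C > (0 : ℝ), ∀ a : Fin S → ℝ, StrictMono a → 0 < a ⟨0, hS⟩ →
      C⁻¹ * (a κ ^ ((2 * l + 1 : ℝ) - 4 * ∑ s ∈ Finset.Iic κ, (m s : ℝ))
            / ∏ s ∈ Finset.Ioi κ, a s ^ (4 * m s))
          ≤ (∫ t : ℝ, t ^ (2 * l) / ∏ s, (t ^ 2 + a s ^ 2) ^ (2 * m s)) ∧
      (∫ t : ℝ, t ^ (2 * l) / ∏ s, (t ^ 2 + a s ^ 2) ^ (2 * m s))
          ≤ C * (a κ ^ ((2 * l + 1 : ℝ) - 4 * ∑ s ∈ Finset.Iic κ, (m s : ℝ))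
            / ∏ s ∈ Finset.Ioi κ, a s ^ (4 * m s)) := by
  refine ⟨max (2 / ((2 * l + 1) * 2 ^ (2 * ∑ s, m s)))⁻¹
    (∫ v : ℝ, v ^ (2 * (l - 2 * ∑ s ∈ Iio κ, m s)) / (v ^ 2 + 1) ^ (2 * m κ)),
    lt_max_of_lt_left (by positivity), fun a hmono h0 => ?_⟩
  have ha : ∀ s, 0 < a s := fun s => h0.trans_le (hmono.monotone (Nat.zero_le s.val))
  have hκ := ha κ
  exact inv_max_mul_le_and_le_max_mul (by positivity)
    (div_nonneg (by positivity) (prod_nonneg fun s _ => (pow_pos (ha s) _).le))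
    (le_integral_pow_div_prod_sq_add_sq_pow hmono.monotone ha
      (integrable_pow_div_prod_sq_add_sq_pow hκ1 hκ2 fun s => (ha s).ne'))
    (integral_pow_div_prod_sq_add_sq_pow_le hκ1 hκ2 ha)

/-- two-sided estimate for `∫ t^{2l} ∏_s (t² + a_s²)^{-2m_s} dt`
with a constant depending only on `S`, `l` and `m₁,…,m_S` (not on `a₁,…,a_S`),
assuming only `0 < a₁ < … < a_S`. -/
theorem statement7 (S : ℕ) (hS : 0 < S) (m : Fin S → ℕ) (hm : ∀ s, 0 < m s)
    (l : ℕ) (hl : l < 2 * ∑ s, m s) (κ : Fin S)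
    (hκ1 : 2 * ∑ s ∈ Finset.Iio κ, m s ≤ l)
    (hκ2 : l < 2 * ∑ s ∈ Finset.Iic κ, m s) :
    ∃ C > (0 : ℝ), ∀ a : Fin S → ℝ, StrictMono a → 0 < a ⟨0, hS⟩ →
      C⁻¹ * (a κ ^ ((2 * l + 1 : ℝ) - 4 * ∑ s ∈ Finset.Iic κ, (m s : ℝ))
            / ∏ s ∈ Finset.Ioi κ, a s ^ (4 * m s))
          ≤ (∫ t : ℝ, t ^ (2 * l) / ∏ s, (t ^ 2 + a s ^ 2) ^ (2 * m s)) ∧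
      (∫ t : ℝ, t ^ (2 * l) / ∏ s, (t ^ 2 + a s ^ 2) ^ (2 * m s))
          ≤ C * (a κ ^ ((2 * l + 1 : ℝ) - 4 * ∑ s ∈ Finset.Iic κ, (m s : ℝ))
            / ∏ s ∈ Finset.Ioi κ, a s ^ (4 * m s)) :=
  statement7_general S hS m l κ hκ1 hκ2
end
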